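/- arXiv:math/0504218 — 2 statements merged into one kernel-verified Lean document; each statement's English description precedes it below -/
import Mathlib

section
/- Let r ≥ 2 and let ω_1, …, ω_r be complex numbers with Re(ω_j) > 0 for all j. Then for every complex number s with Re(s) > 1, Z(s,(ω_1,…,ω_r)) = Z(s,(ω_1,…,ω_{r-1})) · Z(s + ω_r, (ω_1,…,ω_r)). -/
/-!
Split `ℕ^{r+1}` according to whether the last coordinate vanishes. Tuples with `m_r = 0` are
`Fin.snoc m 0` with `m ∈ ℕ^r` and give `Z(s, (ω₀,…,ω_{r-1}))`; the others are `m + e_r` with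
`m ∈ ℕ^{r+1}` and give `Z(s + ω_r, ω)`. The splitting is legitimate because the product converges
absolutely: for `1 < σ ≤ Re z` one has `‖ζ(z) - 1‖ ≤ 2^{σ - Re z} ∑_{k ≥ 2} k^{-σ}`, so
`ζ(s + ∑ mⱼωⱼ) - 1` is dominated by the summable product `∏ⱼ (2^{-Re ωⱼ})^{mⱼ}`.
-/

open Finset

theorem summable_prod_apply_of_nonneg {κ : Type*} {n : ℕ} {g : Fin n → κ → ℝ}
    (hg₀ : ∀ j k, 0 ≤ g j k) (hg : ∀ j, Summable (g j)) :
    Summable fun m : Fin n → κ => ∏ j, g j (m j) := by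
  induction n with
  | zero => exact .of_finite
  | succ n ih =>
    have hprod := (hg 0).mul_of_nonneg (ih (fun j => hg₀ j.succ) fun j => hg j.succ) (hg₀ 0)
      fun m => prod_nonneg fun j _ => hg₀ j.succ (m j)
    refine (Fin.consEquiv fun _ => κ).summable_iff.mp ?_
    simpa [Function.comp_def, Fin.prod_univ_succ] using hprod

theorem norm_riemannZeta_sub_one_le {σ : ℝ} (hσ : 1 < σ) {z : ℂ} (hz : σ ≤ z.re) :
    ‖riemannZeta z - 1‖ ≤ 2 ^ (σ - z.re) * ∑' k : ℕ, ((k : ℝ) + 2) ^ (-σ) := by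
  have hz₁ : 1 < z.re := hσ.trans_le hz
  have hζ : riemannZeta z - 1 = ∑' k : ℕ, 1 / ((k + 2 : ℕ) : ℂ) ^ z := by
    rw [zeta_eq_tsum_one_div_nat_cpow hz₁,
      ← (Complex.summable_one_div_nat_cpow.mpr hz₁).sum_add_tsum_nat_add 2]
    simp [sum_range_succ, Complex.zero_cpow (Complex.ne_zero_of_one_lt_re hz₁)]
  have hnorm (k : ℕ) : ‖1 / ((k + 2 : ℕ) : ℂ) ^ z‖ = ((k : ℝ) + 2) ^ (-z.re) := by
    rw [norm_div, norm_one, Complex.norm_natCast_cpow_of_pos (by omega),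
      Real.rpow_neg (by positivity)]
    push_cast; ring
  have hbound (k : ℕ) : ((k : ℝ) + 2) ^ (-z.re) ≤ 2 ^ (σ - z.re) * ((k : ℝ) + 2) ^ (-σ) := by
    rw [show -z.re = (σ - z.re) + -σ by ring, Real.rpow_add (by positivity)]
    exact mul_le_mul_of_nonneg_right (Real.rpow_le_rpow_of_nonpos two_pos
      (le_add_of_nonneg_left k.cast_nonneg) (by linarith)) (by positivity)
  have hsummσ : Summable fun k : ℕ => ((k : ℝ) + 2) ^ (-σ) := by
    simpa using (summable_nat_add_iff 2).mpr (Real.summable_nat_rpow.mpr (by linarith : -σ < -1))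
  have hsumm : Summable fun k : ℕ => ((k : ℝ) + 2) ^ (-z.re) :=
    (hsummσ.mul_left _).of_nonneg_of_le (fun k => by positivity) hbound
  calc ‖riemannZeta z - 1‖ ≤ ∑' k : ℕ, ((k : ℝ) + 2) ^ (-z.re) := by
        rw [hζ, ← tsum_congr hnorm]
        exact norm_tsum_le_tsum_norm (by simpa only [hnorm] using hsumm)
    _ ≤ ∑' k : ℕ, 2 ^ (σ - z.re) * ((k : ℝ) + 2) ^ (-σ) :=
        hsumm.tsum_le_tsum hbound (hsummσ.mul_left _)
    _ = _ := tsum_mul_left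

theorem summable_riemannZeta_add_sum_mul_sub_one {n : ℕ} (ω : Fin n → ℂ) (hω : ∀ j, 0 < (ω j).re)
    {s : ℂ} (hs : 1 < s.re) :
    Summable fun m : Fin n → ℕ => riemannZeta (s + ∑ j, (m j : ℂ) * ω j) - 1 := by
  have hre (m : Fin n → ℕ) : (s + ∑ j, (m j : ℂ) * ω j).re = s.re + ∑ j, (m j : ℝ) * (ω j).re := by
    simp [Complex.re_sum]
  have hgeom : Summable fun m : Fin n → ℕ => ∏ j, ((2 : ℝ) ^ (-(ω j).re)) ^ m j :=
    summable_prod_apply_of_nonneg (fun j k => by positivity) fun j =>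
      summable_geometric_of_lt_one (by positivity)
        (Real.rpow_lt_one_of_one_lt_of_neg one_lt_two (neg_neg_of_pos (hω j)))
  refine .of_norm_bounded (hgeom.mul_right (∑' k : ℕ, ((k : ℝ) + 2) ^ (-s.re))) fun m => ?_
  have hle : s.re ≤ (s + ∑ j, (m j : ℂ) * ω j).re := by
    rw [hre]
    have : 0 ≤ ∑ j, (m j : ℝ) * (ω j).re := sum_nonneg fun j _ => by have := hω j; positivity
    linarith
  refine (norm_riemannZeta_sub_one_le hs hle).trans_eq ?_
  congr 1
  rw [hre, sub_add_cancel_left, ← sum_neg_distrib, Real.rpow_sum_of_pos two_pos]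
  refine prod_congr rfl fun j _ => ?_
  rw [← Real.rpow_natCast, ← Real.rpow_mul zero_le_two]
  ring_nf

theorem Fin.range_snoc_const {α : Type*} {n : ℕ} (a : α) :
    Set.range (fun m : Fin n → α => (Fin.snoc m a : Fin (n + 1) → α)) =
      {q | q (Fin.last n) = a} := by
  ext q
  constructor
  · rintro ⟨m, rfl⟩
    simp
  · intro h
    exact ⟨Fin.init q, by rw [← h.out]; exact Fin.snoc_init_self q⟩

theorem range_add_pi_single_one {ι : Type*} [DecidableEq ι] (i : ι) :
    Set.range (fun m : ι → ℕ => m + Pi.single i 1) = {q | q i ≠ 0} := by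
  ext q
  constructor
  · rintro ⟨m, rfl⟩
    simp
  · intro h
    refine ⟨q - Pi.single i 1, tsub_add_cancel_of_le fun j => ?_⟩
    rcases eq_or_ne j i with rfl | hj
    · simpa [Nat.one_le_iff_ne_zero] using h
    · simp [hj]

theorem tprod_eq_tprod_snoc_zero_mul_tprod_add_single_last {M : Type*} [CommMonoid M]
    [TopologicalSpace M] [ContinuousMul M] [T2Space M] {n : ℕ} {f : (Fin (n + 1) → ℕ) → M}
    (h₀ : Multipliable fun m : Fin n → ℕ => f (Fin.snoc m 0))
    (h₁ : Multipliable fun m : Fin (n + 1) → ℕ => f (m + Pi.single (Fin.last n) 1)) :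
    ∏' m, f m = (∏' m : Fin n → ℕ, f (Fin.snoc m 0)) *
      ∏' m : Fin (n + 1) → ℕ, f (m + Pi.single (Fin.last n) 1) := by
  have hcompl : IsCompl (Set.range fun m : Fin n → ℕ => (Fin.snoc m 0 : Fin (n + 1) → ℕ))
      (Set.range fun m : Fin (n + 1) → ℕ => m + Pi.single (Fin.last n) 1) := by
    rw [Fin.range_snoc_const, range_add_pi_single_one]
    exact isCompl_compl
  exact (((Fin.snoc_left_injective _).hasProd_range_iff.2 h₀.hasProd).mul_isCompl hcompl
    ((add_left_injective _).hasProd_range_iff.2 h₁.hasProd)).tprod_eq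

theorem higherRiemannZeta_ladder_general (r : ℕ) (ω : Fin (r + 1) → ℂ)
    (hω : ∀ j, 0 < (ω j).re) (s : ℂ) (hs : 1 < s.re) :
    (∏' m : Fin (r + 1) → ℕ, riemannZeta (s + ∑ j, (m j : ℂ) * ω j)) =
      (∏' m : Fin r → ℕ, riemannZeta (s + ∑ j, (m j : ℂ) * ω j.castSucc)) *
        ∏' m : Fin (r + 1) → ℕ,
          riemannZeta (s + ω (Fin.last r) + ∑ j, (m j : ℂ) * ω j) := by
  have hsum := summable_riemannZeta_add_sum_mul_sub_one ω hω hs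
  have hmul {γ : Type} {g : γ → Fin (r + 1) → ℕ} (hg : Function.Injective g) :
      Multipliable fun m => riemannZeta (s + ∑ j, (g m j : ℂ) * ω j) := by
    simpa using Complex.multipliable_one_add_of_summable (hsum.comp_injective hg)
  rw [tprod_eq_tprod_snoc_zero_mul_tprod_add_single_last
    (f := fun m => riemannZeta (s + ∑ j, (m j : ℂ) * ω j))
    (hmul (Fin.snoc_left_injective (α := fun _ => ℕ) 0)) (hmul (add_left_injective _))]
  congr 1
  · refine tprod_congr fun m => ?_
    simp [Fin.sum_univ_castSucc]
  · refine tprod_congr fun m => ?_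
    rw [add_assoc]
    simp [Pi.single_apply, add_mul, sum_add_distrib, add_comm]

/-- The ladder relation: for `r+1 ≥ 2` weights with positive real parts and `Re s > 1`,
`Z(s,(ω₀,…,ω_r)) = Z(s,(ω₀,…,ω_{r-1})) · Z(s + ω_r,(ω₀,…,ω_r))`. -/
theorem higherRiemannZeta_ladder (r : ℕ) (hr : 1 ≤ r) (ω : Fin (r + 1) → ℂ)
    (hω : ∀ j, 0 < (ω j).re) (s : ℂ) (hs : 1 < s.re) :
    (∏' m : Fin (r + 1) → ℕ, riemannZeta (s + ∑ j, (m j : ℂ) * ω j)) =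
      (∏' m : Fin r → ℕ, riemannZeta (s + ∑ j, (m j : ℂ) * ω j.castSucc)) *
        ∏' m : Fin (r + 1) → ℕ,
          riemannZeta (s + ω (Fin.last r) + ∑ j, (m j : ℂ) * ω j) :=
  higherRiemannZeta_ladder_general r ω hω s hs
end

section
/- Let r ≥ 1, let ω_1, …, ω_r be complex numbers with Re(ω_j) > 0 for all j, and let z be a complex number with Re(z) > 0. Then for every complex number s with Re(s) > r, the Barnes multiple zeta series ∑_{n_1,…,n_r = 0}^∞ (z + n_1ω_1 + ⋯ + n_rω_r)^{-s} converges absolutely, where each complex power is taken with the principal branch. -/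
open Complex Filter Topology

/-! For `w = z + ∑ nⱼωⱼ` one has `‖w‖ ≥ Re w ≥ δ (1 + ∑ nⱼ)` with `δ = min (Re z, Re ωⱼ) > 0`, and
`‖w ^ (-s)‖ ≤ e^{π |Im s|} ‖w‖ ^ (-Re s)`, so the series is dominated by `∑ (1 + ∑ nⱼ) ^ (-Re s)`.
Since `∏ (1 + nⱼ) ≤ (1 + ∑ nⱼ) ^ r`, that series is in turn dominated by the product of `r` copies
of the one-variable series `∑ₙ (1 + n) ^ (-q)` with `q r ≤ Re s` and `q > 1`. -/

theorem summable_pi_prod_of_nonneg {ι α : Type*} [Fintype ι] {f : ι → α → ℝ}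
    (hf0 : ∀ i a, 0 ≤ f i a) (hf : ∀ i, Summable (f i)) :
    Summable fun x : ι → α => ∏ i, f i (x i) := by
  classical
  refine summable_of_sum_le (c := ∏ i, ∑' a, f i a)
    (fun x => Finset.prod_nonneg fun i _ => hf0 i (x i)) fun u => ?_
  calc ∑ x ∈ u, ∏ i, f i (x i)
      ≤ ∑ x ∈ Fintype.piFinset fun i => u.image (· i), ∏ i, f i (x i) :=
        Finset.sum_le_sum_of_subset_of_nonneg
          (fun x hx => Fintype.mem_piFinset.2 fun i => Finset.mem_image_of_mem _ hx)
          fun x _ _ => Finset.prod_nonneg fun i _ => hf0 i (x i)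
    _ = ∏ i, ∑ a ∈ u.image (· i), f i a := (Finset.prod_univ_sum _ _).symm
    _ ≤ ∏ i, ∑' a, f i a := Finset.prod_le_prod
        (fun i _ => Finset.sum_nonneg fun a _ => hf0 i a)
        fun i _ => (hf i).sum_le_tsum _ fun a _ => hf0 i a

theorem prod_one_add_le_one_add_sum_pow {ι : Type*} [Fintype ι] {x : ι → ℝ}
    (hx : ∀ i, 0 ≤ x i) : ∏ i, (1 + x i) ≤ (1 + ∑ i, x i) ^ Fintype.card ι := by
  calc ∏ i, (1 + x i) ≤ ∏ _i : ι, (1 + ∑ j, x j) :=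
        Finset.prod_le_prod (fun i _ => by linarith [hx i]) fun i _ => by
          linarith [Finset.single_le_sum (fun j _ => hx j) (Finset.mem_univ i)]
    _ = (1 + ∑ i, x i) ^ Fintype.card ι := by simp

theorem one_add_sum_rpow_neg_le_prod {ι : Type*} [Fintype ι] {x : ι → ℝ} (hx : ∀ i, 0 ≤ x i)
    {p q : ℝ} (hq : 0 ≤ q) (hqp : q * Fintype.card ι ≤ p) :
    (1 + ∑ i, x i) ^ (-p) ≤ ∏ i, (1 + x i) ^ (-q) := by
  have hS : 1 ≤ 1 + ∑ i, x i := le_add_of_nonneg_right (Finset.sum_nonneg fun i _ => hx i)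
  have hprod : 0 < ∏ i, (1 + x i) := Finset.prod_pos fun i _ => by linarith [hx i]
  calc (1 + ∑ i, x i) ^ (-p) ≤ (1 + ∑ i, x i) ^ (-(q * Fintype.card ι)) :=
        Real.rpow_le_rpow_of_exponent_le hS (neg_le_neg hqp)
    _ = ((1 + ∑ i, x i) ^ Fintype.card ι) ^ (-q) := by
        rw [← Real.rpow_natCast, ← Real.rpow_mul (by linarith), mul_neg, mul_comm]
    _ ≤ (∏ i, (1 + x i)) ^ (-q) :=
        Real.rpow_le_rpow_of_nonpos hprod (prod_one_add_le_one_add_sum_pow hx) (neg_nonpos.2 hq)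
    _ = ∏ i, (1 + x i) ^ (-q) :=
        Real.finsetProd_rpow _ _ (fun i _ => by linarith [hx i]) _ |>.symm

theorem summable_one_add_sum_rpow_neg {ι : Type*} [Fintype ι] {p : ℝ}
    (hp : Fintype.card ι < p) :
    Summable fun n : ι → ℕ => (1 + ∑ i, (n i : ℝ)) ^ (-p) := by
  set d : ℝ := (Fintype.card ι : ℝ)
  -- `q := p / d` would do, except for `d = 0`
  set q := 1 + (p - d) / (d + 1)
  have hd : 0 ≤ d := Nat.cast_nonneg _
  have hq : 1 < q := lt_add_of_pos_right _ (div_pos (by linarith) (by linarith))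
  have hqd : q * d ≤ p := by
    have : (p - d) / (d + 1) * d ≤ p - d := by
      rw [div_mul_eq_mul_div, div_le_iff₀ (by linarith)]
      nlinarith
    linarith [add_mul 1 ((p - d) / (d + 1)) d]
  have hg : Summable fun m : ℕ => (1 + (m : ℝ)) ^ (-q) := by
    simpa [Real.rpow_neg, abs_of_nonneg, add_comm, add_nonneg] using
      (Real.summable_one_div_nat_add_rpow 1 q).2 hq
  exact (summable_pi_prod_of_nonneg (fun _ _ => by positivity) fun _ => hg).of_nonneg_of_le
    (fun _ => by positivity) fun _ =>
      one_add_sum_rpow_neg_le_prod (fun _ => Nat.cast_nonneg _) (by linarith) hqd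

theorem norm_cpow_le_exp_mul_rpow (z w : ℂ) :
    ‖z ^ w‖ ≤ Real.exp (Real.pi * |w.im|) * ‖z‖ ^ w.re := by
  have harg : -(Real.pi * |w.im|) ≤ arg z * w.im := by
    calc -(Real.pi * |w.im|) ≤ -|arg z * w.im| := by
          rw [abs_mul]; gcongr; exact abs_arg_le_pi z
      _ ≤ arg z * w.im := neg_abs_le _
  calc ‖z ^ w‖ ≤ ‖z‖ ^ w.re / Real.exp (arg z * w.im) := norm_cpow_le z w
    _ ≤ ‖z‖ ^ w.re / Real.exp (-(Real.pi * |w.im|)) := by gcongr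
    _ = _ := by rw [Real.exp_neg, div_inv_eq_mul, mul_comm]

theorem mul_one_add_sum_le_re_add_sum {ι : Type*} [Fintype ι] {δ : ℝ} {z : ℂ} {ω : ι → ℂ}
    (hz : δ ≤ z.re) (hω : ∀ i, δ ≤ (ω i).re) (n : ι → ℕ) :
    δ * (1 + ∑ i, (n i : ℝ)) ≤ (z + ∑ i, (n i : ℂ) * ω i).re := by
  simp only [mul_add, mul_one, Finset.mul_sum, add_re, re_sum, mul_re, natCast_re, natCast_im,
    zero_mul, sub_zero]
  exact add_le_add hz <| Finset.sum_le_sum fun i _ => by rw [mul_comm]; gcongr; exact hω i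

theorem exists_pos_forall_le_of_finite {ι : Type*} [Finite ι] {f : ι → ℝ}
    (hf : ∀ i, 0 < f i) : ∃ δ > 0, ∀ i, δ ≤ f i := by
  cases isEmpty_or_nonempty ι with
  | inl _ => exact ⟨1, one_pos, isEmptyElim⟩
  | inr _ =>
    obtain ⟨i, hi⟩ := Finite.exists_min f
    exact ⟨f i, hf i, hi⟩

theorem barnesZeta_abs_convergence_general (r : ℕ) (ω : Fin r → ℂ)
    (hω : ∀ j, 0 < (ω j).re) (z : ℂ) (hz : 0 < z.re) (s : ℂ) (hs : (r : ℝ) < s.re) :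
    Summable (fun n : Fin r → ℕ => ‖(z + ∑ j, (n j : ℂ) * ω j) ^ (-s)‖) := by
  obtain ⟨δ₀, hδ₀, hδ₀ω⟩ := exists_pos_forall_le_of_finite hω
  set δ := min z.re δ₀
  have hδ : 0 < δ := lt_min hz hδ₀
  have hs0 : 0 ≤ s.re := (Nat.cast_nonneg r).trans hs.le
  have hnorm (n : Fin r → ℕ) : δ * (1 + ∑ j, (n j : ℝ)) ≤ ‖z + ∑ j, (n j : ℂ) * ω j‖ :=
    (mul_one_add_sum_le_re_add_sum (min_le_left _ _)
      (fun j => (min_le_right _ _).trans (hδ₀ω j)) n).trans (re_le_norm _)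
  refine ((summable_one_add_sum_rpow_neg (by simpa using hs)).mul_left
    (Real.exp (Real.pi * |s.im|) * δ ^ (-s.re))).of_nonneg_of_le (fun _ => norm_nonneg _)
    fun n => ?_
  calc ‖(z + ∑ j, (n j : ℂ) * ω j) ^ (-s)‖
      ≤ Real.exp (Real.pi * |s.im|) * ‖z + ∑ j, (n j : ℂ) * ω j‖ ^ (-s.re) := by
        simpa using norm_cpow_le_exp_mul_rpow (z + ∑ j, (n j : ℂ) * ω j) (-s)
    _ ≤ Real.exp (Real.pi * |s.im|) * (δ * (1 + ∑ j, (n j : ℝ))) ^ (-s.re) :=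
        mul_le_mul_of_nonneg_left
          (Real.rpow_le_rpow_of_nonpos (by positivity) (hnorm n) (neg_nonpos.2 hs0)) (by positivity)
    _ = Real.exp (Real.pi * |s.im|) * δ ^ (-s.re) * (1 + ∑ j, (n j : ℝ)) ^ (-s.re) := by
        rw [Real.mul_rpow hδ.le (by positivity), mul_assoc]

/-- Absolute convergence of the Barnes multiple zeta series: for `Re z > 0`,
`Re ω_j > 0` and `Re s > r`, the series `∑_{n₁,…,n_r ≥ 0} (z + n₁ω₁ + ⋯ + n_rω_r)^{-s}`
converges absolutely (principal-branch complex powers). -/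
theorem barnesZeta_abs_convergence (r : ℕ) (hr : 1 ≤ r) (ω : Fin r → ℂ)
    (hω : ∀ j, 0 < (ω j).re) (z : ℂ) (hz : 0 < z.re) (s : ℂ) (hs : (r : ℝ) < s.re) :
    Summable (fun n : Fin r → ℕ => ‖(z + ∑ j, (n j : ℂ) * ω j) ^ (-s)‖) :=
  barnesZeta_abs_convergence_general r ω hω z hz s hs
end
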